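/- If X = E₁₁ ∈ Mₙ(ℂ) (the rank-one matrix with a 1 in the (1,1) entry), then Pert(X) = {Z ∈ ∂𝒞 : X ± tZ ∈ 𝒞 for small t > 0} consists exactly of the nonnegative real scalar multiples of X. -/

import Mathlib

open Matrix
open scoped ComplexOrder

/-- Singular values of a square matrix over ℝ or ℂ, in decreasing order:
`sv A i` is the `(i+1)`-st largest singular value. -/
noncomputable def sv {𝕜 : Type*} [RCLike 𝕜] {n : ℕ} (A : Matrix (Fin n) (Fin n) 𝕜)
    (i : Fin n) : ℝ :=
  Real.sqrt (((Matrix.isHermitian_conjTranspose_mul_self A).eigenvalues ∘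
    Tuple.sort ((Matrix.isHermitian_conjTranspose_mul_self A).eigenvalues)) i.rev)

/-- `svN A j` is `s_{j+1}(A)`, with junk value `0` out of range. -/
noncomputable def svN {𝕜 : Type*} [RCLike 𝕜] {n : ℕ} (A : Matrix (Fin n) (Fin n) 𝕜)
    (j : ℕ) : ℝ :=
  if h : j < n then sv A ⟨j, h⟩ else 0

/-- The Ky-Fan `k`-norm: sum of the `k` largest singular values. -/
noncomputable def kyFan {𝕜 : Type*} [RCLike 𝕜] {n : ℕ} (k : ℕ)
    (A : Matrix (Fin n) (Fin n) 𝕜) : ℝ :=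
  ∑ i ∈ Finset.univ.filter (fun i : Fin n => (i : ℕ) < k), sv A i

/-- Parallelism with respect to the Ky-Fan `k`-norm. -/
def KFParallel {𝕜 : Type*} [RCLike 𝕜] {n : ℕ} (k : ℕ)
    (A B : Matrix (Fin n) (Fin n) 𝕜) : Prop :=
  ∃ μ : 𝕜, ‖μ‖ = 1 ∧ kyFan k (A + μ • B) = kyFan k A + kyFan k B

/-- Block diagonal direct sum `X₁ ⊕ X₂`. -/
def bd {R : Type*} [Zero R] {k m : ℕ} (X₁ : Matrix (Fin k) (Fin k) R)
    (X₂ : Matrix (Fin m) (Fin m) R) : Matrix (Fin (k + m)) (Fin (k + m)) R :=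
  Matrix.reindex finSumFinEquiv finSumFinEquiv (Matrix.fromBlocks X₁ 0 0 X₂)

/-- The cone 𝒞 of block matrices `X₁ ⊕ X₂` with `X₁` psd and `s_k(X₁) ≥ s₁(X₂)`. -/
def CC (k m : ℕ) : Set (Matrix (Fin (k + m)) (Fin (k + m)) ℂ) :=
  {X | ∃ (X₁ : Matrix (Fin k) (Fin k) ℂ) (X₂ : Matrix (Fin m) (Fin m) ℂ), X = bd X₁ X₂ ∧ X₁.PosSemidef ∧ svN X₂ 0 ≤ svN X₁ (k - 1)}

/-- The relative boundary of 𝒞: `X₁` psd with `s_k(X₁) = s₁(X₂)`. -/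
def bC (k m : ℕ) : Set (Matrix (Fin (k + m)) (Fin (k + m)) ℂ) :=
  {X | ∃ (X₁ : Matrix (Fin k) (Fin k) ℂ) (X₂ : Matrix (Fin m) (Fin m) ℂ), X = bd X₁ X₂ ∧ X₁.PosSemidef ∧ svN X₂ 0 = svN X₁ (k - 1)}

/-- `Pert(X)`: elements `Z` of `∂𝒞` with `X ± tZ ∈ 𝒞` for all sufficiently small `t > 0`. -/
def Pert (k m : ℕ) (X : Matrix (Fin (k + m)) (Fin (k + m)) ℂ) :
    Set (Matrix (Fin (k + m)) (Fin (k + m)) ℂ) :=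
  {Z | Z ∈ bC k m ∧ ∃ ε : ℝ, 0 < ε ∧ ∀ t : ℝ, 0 < t → t ≤ ε →
    X + t • Z ∈ CC k m ∧ X - t • Z ∈ CC k m}

/-! ### Auxiliary lemmas -/

theorem stdB_eq_diag (c : ℂ) {n : ℕ} (i0 : Fin n) :
    Matrix.single i0 i0 c = diagonal (Pi.single i0 c) := by
  ext a b
  by_cases ha : i0 = a <;> by_cases hb : i0 = b
  · subst ha; subst hb; simp
  · subst ha; rw [single_apply_of_ne _ _ _ _ _ (by tauto), diagonal_apply_ne _ hb]
  · subst hb; rw [single_apply_of_ne _ _ _ _ _ (by tauto),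
      diagonal_apply_ne _ fun h => ha h.symm]
  · by_cases hab : a = b
    · subst hab; rw [single_apply_of_ne _ _ _ _ _ (by tauto), diagonal_apply_eq,
        Pi.single_apply, if_neg (Ne.symm ha)]
    · rw [single_apply_of_ne _ _ _ _ _ (by tauto), diagonal_apply_ne _ hab]

theorem bd_inj {k m : ℕ} {A C : Matrix (Fin k) (Fin k) ℂ} {B D : Matrix (Fin m) (Fin m) ℂ}
    (h : bd A B = bd C D) : A = C ∧ B = D := by
  have h2 : fromBlocks A 0 0 B = fromBlocks C (0:Matrix (Fin k) (Fin m) ℂ) 0 D :=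
    (Matrix.reindex finSumFinEquiv finSumFinEquiv).injective h
  constructor
  · ext i j; have := congrFun (congrFun h2 (Sum.inl i)) (Sum.inl j); simpa using this
  · ext i j; have := congrFun (congrFun h2 (Sum.inr i)) (Sum.inr j); simpa using this

theorem bd_add {k m : ℕ} (A C : Matrix (Fin k) (Fin k) ℂ) (B D : Matrix (Fin m) (Fin m) ℂ) :
    bd A B + bd C D = bd (A + C) (B + D) := by
  ext i j
  simp only [bd, reindex_apply, Matrix.add_apply, submatrix_apply]
  rcases finSumFinEquiv.symm i with a | a <;> rcases finSumFinEquiv.symm j with b | b <;>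
    simp [Matrix.fromBlocks]

theorem bd_smul {k m : ℕ} (r : ℝ) (A : Matrix (Fin k) (Fin k) ℂ) (B : Matrix (Fin m) (Fin m) ℂ) :
    r • bd A B = bd (r • A) (r • B) := by
  ext i j
  simp only [bd, reindex_apply, Matrix.smul_apply, submatrix_apply]
  rcases finSumFinEquiv.symm i with a | a <;> rcases finSumFinEquiv.symm j with b | b <;>
    simp [Matrix.fromBlocks]

theorem bd_sub {k m : ℕ} (A C : Matrix (Fin k) (Fin k) ℂ) (B D : Matrix (Fin m) (Fin m) ℂ) :
    bd A B - bd C D = bd (A - C) (B - D) := by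
  ext i j
  simp only [bd, reindex_apply, Matrix.sub_apply, submatrix_apply]
  rcases finSumFinEquiv.symm i with a | a <;> rcases finSumFinEquiv.symm j with b | b <;>
    simp [Matrix.fromBlocks]

theorem bigE {k m : ℕ} (hk : 0 < k) (h0 : (0:ℕ) < k + m) :
    (Matrix.single (⟨0, h0⟩ : Fin (k + m)) (⟨0, h0⟩ : Fin (k + m)) (1 : ℂ)) =
      bd (Matrix.single (⟨0, hk⟩ : Fin k) (⟨0, hk⟩ : Fin k) (1:ℂ))
        (0 : Matrix (Fin m) (Fin m) ℂ) := by
  have key : ∀ si sj : Fin k ⊕ Fin m,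
      Matrix.single (⟨0, h0⟩ : Fin (k + m)) (⟨0, h0⟩ : Fin (k + m)) (1 : ℂ)
        (finSumFinEquiv si) (finSumFinEquiv sj)
      = fromBlocks (Matrix.single (⟨0, hk⟩ : Fin k) (⟨0, hk⟩ : Fin k) (1:ℂ)) 0 0
          (0 : Matrix (Fin m) (Fin m) ℂ) si sj := by
    rintro (a | a) (b | b) <;>
      simp [Matrix.single, Fin.ext_iff] <;> omega
  ext i j
  have := key (finSumFinEquiv.symm i) (finSumFinEquiv.symm j)
  simp only [Equiv.apply_symm_apply] at this
  rw [this]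
  simp [bd]

theorem rsmul_eq_csmul {p q : ℕ} (c : ℝ) (M : Matrix (Fin p) (Fin q) ℂ) :
    c • M = (c : ℂ) • M := by
  ext i j
  simp [Matrix.smul_apply, Complex.real_smul]

theorem eig_of_zero {n : ℕ} {A : Matrix (Fin n) (Fin n) ℂ} (h : A.IsHermitian) (hA : A = 0)
    (i : Fin n) : h.eigenvalues i = 0 := by
  subst hA; rw [Matrix.IsHermitian.eigenvalues_eq]; simp

theorem herm_zero_of_eig {n : ℕ} {A : Matrix (Fin n) (Fin n) ℂ} (h : A.IsHermitian)
    (h0 : ∀ i, h.eigenvalues i = 0) : A = 0 := by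
  have hc : RCLike.ofReal ∘ h.eigenvalues = (fun _ => 0 : Fin n → ℂ) := by
    funext i; simp [h0]
  rw [h.spectral_theorem, hc]
  simp [show Matrix.diagonal (fun _ => (0:ℂ) : Fin n → ℂ) = 0 from diagonal_zero]

theorem svN_nonneg {n : ℕ} (A : Matrix (Fin n) (Fin n) ℂ) (j : ℕ) : 0 ≤ svN A j := by
  unfold svN; split
  · exact Real.sqrt_nonneg _
  · exact le_refl 0

theorem svN_of_zero {n : ℕ} (j : ℕ) : svN (0 : Matrix (Fin n) (Fin n) ℂ) j = 0 := by
  unfold svN; split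
  · unfold sv
    rw [Function.comp_apply, eig_of_zero _ (by simp), Real.sqrt_zero]
  · rfl

theorem eq_zero_of_svN_zero {n : ℕ} (hn : 0 < n) {A : Matrix (Fin n) (Fin n) ℂ}
    (h : svN A 0 = 0) : A = 0 := by
  rw [svN, dif_pos hn] at h
  set f := (Matrix.isHermitian_conjTranspose_mul_self A).eigenvalues with hf
  have hnn : ∀ i, 0 ≤ f i := fun i =>
    (Matrix.posSemidef_conjTranspose_mul_self A).eigenvalues_nonneg i
  have hmax : ∀ i, f i ≤ (f ∘ Tuple.sort f) (Fin.rev ⟨0, hn⟩) := by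
    intro i
    have h1 : f i = (f ∘ Tuple.sort f) ((Tuple.sort f)⁻¹ i) := by simp
    rw [h1]
    refine Tuple.monotone_sort f ?_
    rw [Fin.le_def, Fin.val_rev]
    simp only [Fin.val_mk]
    have := ((Tuple.sort f)⁻¹ i).isLt
    omega
  have hval : (f ∘ Tuple.sort f) (Fin.rev ⟨0, hn⟩) = 0 := by
    have := Real.sqrt_eq_zero (hnn _) |>.mp h
    exact this
  have hall : ∀ i, f i = 0 := fun i => le_antisymm (hval ▸ hmax i) (hnn i)
  exact Matrix.conjTranspose_mul_self_eq_zero.mp (herm_zero_of_eig _ hall)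

theorem svN_last_of_det_zero {n : ℕ} (hn : 1 < n) {A : Matrix (Fin n) (Fin n) ℂ}
    (hdet : A.det = 0) : svN A (n - 1) = 0 := by
  rw [svN, dif_pos (by omega)]
  have hd0 : (Aᴴ * A).det = 0 := by
    rw [Matrix.det_mul, Matrix.det_conjTranspose, hdet, mul_zero]
  have hprod := (Matrix.isHermitian_conjTranspose_mul_self A).det_eq_prod_eigenvalues
  rw [hd0] at hprod
  replace hprod := hprod.symm
  set f := (Matrix.isHermitian_conjTranspose_mul_self A).eigenvalues with hf
  have hnn : ∀ i, 0 ≤ f i := fun i =>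
    (Matrix.posSemidef_conjTranspose_mul_self A).eigenvalues_nonneg i
  obtain ⟨i, -, hi⟩ := Finset.prod_eq_zero_iff.mp hprod
  have hi' : f i = 0 := RCLike.ofReal_eq_zero.mp hi
  have hrev : (Fin.rev (⟨n - 1, by omega⟩ : Fin n)) = ⟨0, by omega⟩ := by
    rw [Fin.ext_iff, Fin.val_rev]; simp; omega
  unfold sv
  rw [hrev]
  have h0 : (f ∘ Tuple.sort f) ⟨0, by omega⟩ = 0 := by
    refine le_antisymm ?_ (hnn _)
    calc (f ∘ Tuple.sort f) ⟨0, by omega⟩ ≤ (f ∘ Tuple.sort f) ((Tuple.sort f)⁻¹ i) :=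
          Tuple.monotone_sort f (by simp [Fin.le_def])
      _ = f i := by simp
      _ = 0 := hi'
  rw [h0, Real.sqrt_zero]

theorem psd_diag_nonneg {n : ℕ} {P : Matrix (Fin n) (Fin n) ℂ} (hP : P.PosSemidef) (j : Fin n) :
    0 ≤ P j j := by
  exact hP.diag_nonneg

theorem psd_col_zero {n : ℕ} {P : Matrix (Fin n) (Fin n) ℂ} (hP : P.PosSemidef) {j : Fin n}
    (hj : P j j = 0) (i : Fin n) : P i j = 0 := by
  obtain ⟨B, rfl⟩ : ∃ B : Matrix (Fin n) (Fin n) ℂ, P = Bᴴ * B := by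
    open scoped MatrixOrder in
    obtain ⟨B, hB⟩ := CStarAlgebra.nonneg_iff_eq_star_mul_self.mp hP.nonneg
    exact ⟨B, hB⟩
  have hsum : ∑ l, Complex.normSq (B l j) = 0 := by
    have h1 : (Bᴴ * B) j j = ∑ l, (starRingEnd ℂ) (B l j) * B l j := by
      simp [Matrix.mul_apply, Matrix.conjTranspose_apply]
    rw [h1] at hj
    have h2 : ∑ l, ((Complex.normSq (B l j) : ℝ) : ℂ) = 0 := by
      rw [← hj]; congr 1; funext l; rw [← Complex.normSq_eq_conj_mul_self]
    exact_mod_cast h2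
  have hB : ∀ l, B l j = 0 := by
    intro l
    have := (Finset.sum_eq_zero_iff_of_nonneg (fun l _ => Complex.normSq_nonneg _)).mp hsum l
      (Finset.mem_univ l)
    exact Complex.normSq_eq_zero.mp this
  simp [Matrix.mul_apply, Matrix.conjTranspose_apply, hB]

theorem perturb_scalar {n : ℕ} (hn : 0 < n) {P : Matrix (Fin n) (Fin n) ℂ} {t : ℝ} (ht : 0 < t)
    (hP : P.PosSemidef)
    (h2 : (Matrix.single (⟨0, hn⟩ : Fin n) (⟨0, hn⟩ : Fin n) (1:ℂ) - t • P).PosSemidef) :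
    0 ≤ (P ⟨0, hn⟩ ⟨0, hn⟩).re ∧
      P = ((P ⟨0, hn⟩ ⟨0, hn⟩).re : ℂ) •
        Matrix.single (⟨0, hn⟩ : Fin n) (⟨0, hn⟩ : Fin n) (1:ℂ) := by
  set z0 : Fin n := ⟨0, hn⟩ with hz0
  have hdiag : ∀ j : Fin n, j ≠ z0 → P j j = 0 := by
    intro j hj
    have ha := Complex.le_def.mp (psd_diag_nonneg hP j)
    have hb := psd_diag_nonneg h2 j
    have hE : Matrix.single z0 z0 (1:ℂ) j j = 0 :=
      single_apply_of_ne _ _ _ _ _ (by tauto)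
    rw [Matrix.sub_apply, Matrix.smul_apply, hE, zero_sub] at hb
    have hre2 := (Complex.le_def.mp hb).1
    rw [Complex.zero_re, Complex.neg_re, Complex.smul_re, smul_eq_mul] at hre2
    have hple : t * (P j j).re ≤ 0 := by linarith
    have hge : 0 ≤ (P j j).re := by simpa using ha.1
    have h0 : (P j j).re = 0 := by nlinarith
    apply Complex.ext
    · simpa using h0
    · simpa using ha.2.symm
  have hcol : ∀ i j : Fin n, j ≠ z0 → P i j = 0 := fun i j hj => psd_col_zero hP (hdiag j hj) i
  have hrow : ∀ i j : Fin n, i ≠ z0 → P i j = 0 := by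
    intro i j hi
    have h1 : Pᴴ j i = P j i := congrFun (congrFun hP.1 j) i
    rw [Matrix.conjTranspose_apply, hcol j i hi] at h1
    rw [← star_star (P i j), h1, star_zero]
  have h00nn := Complex.le_def.mp (psd_diag_nonneg hP z0)
  have h00 : P z0 z0 = ((P z0 z0).re : ℂ) := by
    apply Complex.ext
    · simp
    · simpa using h00nn.2.symm
  refine ⟨by simpa using h00nn.1, ?_⟩
  ext i j
  by_cases hi : i = z0 <;> by_cases hj : j = z0
  · subst hi; subst hj
    rw [Matrix.smul_apply, single_apply_same, smul_eq_mul, mul_one]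
    exact h00
  · rw [hcol i j hj, Matrix.smul_apply,
      single_apply_of_ne _ _ _ _ _ (by tauto), smul_zero]
  · rw [hrow i j hi, Matrix.smul_apply,
      single_apply_of_ne _ _ _ _ _ (by tauto), smul_zero]
  · rw [hrow i j hi, Matrix.smul_apply,
      single_apply_of_ne _ _ _ _ _ (by tauto), smul_zero]

theorem psd_scalarE {n : ℕ} (hn : 0 < n) {r : ℝ} (hr : 0 ≤ r) :
    ((r : ℂ) • Matrix.single (⟨0, hn⟩ : Fin n) (⟨0, hn⟩ : Fin n) (1:ℂ)).PosSemidef := by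
  rw [stdB_eq_diag, ← Matrix.diagonal_smul]
  refine Matrix.posSemidef_diagonal_iff.mpr fun i => ?_
  rw [Pi.smul_apply, Pi.single_apply]
  split
  · simpa using (by exact_mod_cast hr : (0:ℂ) ≤ (r:ℂ))
  · simp

theorem det_scalarE {n : ℕ} (hn : 1 < n) (r : ℂ) :
    (r • Matrix.single (⟨0, by omega⟩ : Fin n) (⟨0, by omega⟩ : Fin n) (1:ℂ)).det = 0 := by
  rw [stdB_eq_diag, ← Matrix.diagonal_smul, Matrix.det_diagonal]
  refine Finset.prod_eq_zero (Finset.mem_univ (⟨1, hn⟩ : Fin n)) ?_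
  rw [Pi.smul_apply, Pi.single_apply, if_neg (by simp [Fin.ext_iff]), smul_zero]


theorem stmt15 (k m : ℕ) (hk : 1 < k) (hm : 0 < m) :
    Pert k m (Matrix.single (⟨0, by omega⟩ : Fin (k + m)) (⟨0, by omega⟩ : Fin (k + m)) (1 : ℂ)) =
      {Z | ∃ c : ℝ, 0 ≤ c ∧
        Z = c • Matrix.single (⟨0, by omega⟩ : Fin (k + m)) (⟨0, by omega⟩ : Fin (k + m)) (1 : ℂ)} := by
  have hk0 : 0 < k := by omega
  have hkm : (0:ℕ) < k + m := by omega
  set E₁ : Matrix (Fin k) (Fin k) ℂ := Matrix.single (⟨0, hk0⟩ : Fin k) (⟨0, hk0⟩ : Fin k) (1:ℂ)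
    with hE₁
  set X : Matrix (Fin (k+m)) (Fin (k+m)) ℂ :=
    Matrix.single (⟨0, hkm⟩ : Fin (k+m)) (⟨0, hkm⟩ : Fin (k+m)) (1:ℂ) with hX
  have hXbd : X = bd E₁ (0 : Matrix (Fin m) (Fin m) ℂ) := bigE hk0 hkm
  have hsvE : ∀ r : ℝ, svN ((r:ℂ) • E₁) (k - 1) = 0 := fun r =>
    svN_last_of_det_zero hk (det_scalarE hk (r:ℂ))
  ext Z
  constructor
  · rintro ⟨⟨Z₁, Z₂, rfl, hZ₁psd, hsv⟩, ε, hε, h⟩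
    obtain ⟨-, hminus⟩ := h ε hε le_rfl
    obtain ⟨Y₁, Y₂, hY, hY₁psd, -⟩ := hminus
    have hdecomp : X - ε • bd Z₁ Z₂ = bd (E₁ - ε • Z₁) (0 - ε • Z₂) := by
      rw [hXbd, bd_smul, bd_sub]
    rw [hdecomp] at hY
    obtain ⟨h1, -⟩ := bd_inj hY
    rw [← h1] at hY₁psd
    obtain ⟨hc, hZ₁⟩ := perturb_scalar hk0 hε hZ₁psd hY₁psd
    set c : ℝ := (Z₁ ⟨0, hk0⟩ ⟨0, hk0⟩).re with hcdef
    have hZ₂ : Z₂ = 0 := by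
      apply eq_zero_of_svN_zero hm
      rw [hsv, hZ₁, hsvE c]
    refine ⟨c, hc, ?_⟩
    rw [hZ₂, hZ₁, rsmul_eq_csmul]
    show bd ((c:ℂ) • E₁) (0 : Matrix (Fin m) (Fin m) ℂ) = (c:ℂ) • X
    rw [hXbd]
    have : (c:ℂ) • (0 : Matrix (Fin m) (Fin m) ℂ) = 0 := smul_zero _
    ext i j
    rw [show (c:ℂ) • bd E₁ (0 : Matrix (Fin m) (Fin m) ℂ)
        = bd ((c:ℂ) • E₁) ((c:ℂ) • (0 : Matrix (Fin m) (Fin m) ℂ)) from ?_, this]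
    · ext i j
      simp only [bd, reindex_apply, Matrix.smul_apply, submatrix_apply]
      rcases finSumFinEquiv.symm i with a | a <;> rcases finSumFinEquiv.symm j with b | b <;>
        simp [Matrix.fromBlocks]
  · rintro ⟨c, hc, rfl⟩
    have hmem : ∀ r : ℝ, 0 ≤ r → bd ((r:ℂ) • E₁) (0 : Matrix (Fin m) (Fin m) ℂ) ∈ CC k m := by
      intro r hr
      refine ⟨(r:ℂ) • E₁, 0, rfl, psd_scalarE hk0 hr, ?_⟩
      rw [svN_of_zero]
      exact svN_nonneg _ _
    have hZbd : ∀ r : ℝ, (r • X : Matrix (Fin (k+m)) (Fin (k+m)) ℂ)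
        = bd ((r:ℂ) • E₁) (0 : Matrix (Fin m) (Fin m) ℂ) := by
      intro r
      rw [hXbd, bd_smul, rsmul_eq_csmul, smul_zero]
    constructor
    · refine ⟨(c:ℂ) • E₁, 0, ?_, psd_scalarE hk0 hc, ?_⟩
      · rw [← hZbd c]
      · rw [svN_of_zero, hsvE c]
    · refine ⟨1 / (c + 1), by positivity, fun t ht htε => ?_⟩
      have htc : t * c ≤ 1 := by
        rcases eq_or_lt_of_le hc with hc0 | hc0
        · rw [← hc0, mul_zero]; norm_num
        · have h1 : t ≤ 1 / (c+1) := htε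
          have h2 : t * c ≤ (1 / (c+1)) * c := by
            apply mul_le_mul_of_nonneg_right h1 (le_of_lt hc0)
          have h3 : (1 / (c+1)) * c < 1 := by
            rw [div_mul_eq_mul_div, one_mul, div_lt_one (by linarith)]
            linarith
          linarith
      constructor
      · have : X + t • (c • X) = (1 + t * c) • X := by
          rw [smul_smul, add_smul, one_smul]
        rw [this, hZbd]
        exact hmem _ (by nlinarith)
      · have : X - t • (c • X) = (1 - t * c) • X := by
          rw [smul_smul, sub_smul, one_smul]
        rw [this, hZbd]
        exact hmem _ (by nlinarith)
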